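/- Let S be a commutative noetherian ring, let A be an m × n matrix over S such that Cok A is isomorphic to Cok B for a p × q matrix B over S, and let x ∈ S. Then Cok(xA) ⊕ (S/(x))^p ≅ Cok(xB) ⊕ (S/(x))^m as S-modules. -/

import Mathlib

universe u

/-- The cokernel of the `S`-linear map `S^q → S^p` given by a `p × q` matrix `A`. -/
abbrev MatCok {S : Type u} [CommRing S] {p q : ℕ} (A : Matrix (Fin p) (Fin q) S) : Type u :=
  (Fin p → S) ⧸ LinearMap.range A.mulVecLin

section Aux

variable {R : Type*} [CommRing R] {M N : Type*} [AddCommGroup M] [AddCommGroup N]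
  [Module R M] [Module R N]

/-- Lower shear equivalence `(a, b) ↦ (a, b + f a)`. -/
def shearL (f : M →ₗ[R] N) : (M × N) ≃ₗ[R] (M × N) where
  toFun v := (v.1, v.2 + f v.1)
  invFun v := (v.1, v.2 - f v.1)
  map_add' v w := by simp [Prod.ext_iff]; abel
  map_smul' c v := by simp [Prod.ext_iff, smul_add]
  left_inv v := by simp
  right_inv v := by simp

/-- Upper shear equivalence `(a, b) ↦ (a + f b, b)`. -/
def shearU (f : N →ₗ[R] M) : (M × N) ≃ₗ[R] (M × N) where
  toFun v := (v.1 + f v.2, v.2)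
  invFun v := (v.1 - f v.2, v.2)
  map_add' v w := by simp [Prod.ext_iff]; abel
  map_smul' c v := by simp [Prod.ext_iff, smul_add]
  left_inv v := by simp
  right_inv v := by simp

/-- Quotient of a product by a product of submodules. -/
noncomputable def quotProd (p : Submodule R M) (q : Submodule R N) :
    ((M × N) ⧸ p.prod q) ≃ₗ[R] (M ⧸ p) × (N ⧸ q) :=
  (Submodule.quotEquivOfEq _ _ (by
      rw [LinearMap.ker_prodMap p.mkQ q.mkQ]
      simp)).trans
    (LinearMap.quotKerEquivOfSurjective (LinearMap.prodMap p.mkQ q.mkQ)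
      ((p.mkQ_surjective).prodMap (q.mkQ_surjective)))

lemma map_lsmul_prod (x : R) (p : Submodule R M) (q : Submodule R N) :
    Submodule.map (LinearMap.lsmul R (M × N) x) (p.prod q) =
      (p.map (LinearMap.lsmul R M x)).prod (q.map (LinearMap.lsmul R N x)) := by
  ext ⟨a, b⟩
  constructor
  · rintro ⟨⟨u, v⟩, ⟨hu, hv⟩, hh⟩
    rw [← hh]
    exact ⟨⟨u, hu, rfl⟩, ⟨v, hv, rfl⟩⟩
  · rintro ⟨⟨u, hu, hua⟩, ⟨v, hv, hvb⟩⟩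
    refine ⟨(u, v), ⟨hu, hv⟩, ?_⟩
    rw [Prod.ext_iff]
    exact ⟨hua, hvb⟩

end Aux

lemma map_lsmul_top {S : Type u} [CommRing S] (k : ℕ) (x : S) :
    Submodule.map (LinearMap.lsmul S (Fin k → S) x) ⊤ =
      Submodule.pi Set.univ (fun _ : Fin k => (Ideal.span {x} : Submodule S S)) := by
  ext f
  rw [Submodule.mem_map, Submodule.mem_pi]
  constructor
  · rintro ⟨g, -, rfl⟩ i -
    exact Ideal.mem_span_singleton'.mpr ⟨g i, by simp [mul_comm]⟩
  · intro hf
    choose g hg using fun i => Ideal.mem_span_singleton'.mp (hf i (Set.mem_univ i))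
    refine ⟨g, Submodule.mem_top, ?_⟩
    funext i
    simpa [mul_comm] using hg i

lemma range_smul_mat {S : Type u} [CommRing S] {m n : ℕ} (A : Matrix (Fin m) (Fin n) S) (x : S) :
    LinearMap.range (x • A).mulVecLin =
      Submodule.map (LinearMap.lsmul S (Fin m → S) x) (LinearMap.range A.mulVecLin) := by
  have hx : (x • A).mulVecLin = (LinearMap.lsmul S (Fin m → S) x) ∘ₗ A.mulVecLin := by
    ext v
    simp [Matrix.mulVecLin, Matrix.smul_mulVec]
  rw [hx, LinearMap.range_comp]

/-- If `A` is an `m × n` matrix and `B` is a `p × q` matrix with `Cok A ≅ Cok B`, then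
`Cok(xA) ⊕ (S/(x))^p ≅ Cok(xB) ⊕ (S/(x))^m` as `S`-modules. -/
theorem stmt10 {S : Type u} [CommRing S] [IsNoetherianRing S] {m n p q : ℕ}
    (A : Matrix (Fin m) (Fin n) S) (B : Matrix (Fin p) (Fin q) S) (x : S)
    (h : Nonempty (MatCok A ≃ₗ[S] MatCok B)) :
    Nonempty ((MatCok (x • A) × (Fin p → S ⧸ Ideal.span {x})) ≃ₗ[S]
      (MatCok (x • B) × (Fin m → S ⧸ Ideal.span {x}))) := by
  obtain ⟨e⟩ := h
  set RA := LinearMap.range A.mulVecLin with hRA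
  set RB := LinearMap.range B.mulVecLin with hRB
  let π1 : (Fin m → S) →ₗ[S] MatCok A := RA.mkQ
  let π2 : (Fin p → S) →ₗ[S] MatCok A := (e.symm : MatCok B →ₗ[S] MatCok A) ∘ₗ RB.mkQ
  have hπ1 : Function.Surjective π1 := RA.mkQ_surjective
  have hπ2 : Function.Surjective π2 := e.symm.surjective.comp RB.mkQ_surjective
  obtain ⟨φ, hφ⟩ := Module.projective_lifting_property π2 π1 hπ2
  obtain ⟨ψ, hψ⟩ := Module.projective_lifting_property π1 π2 hπ1
  let θ : ((Fin m → S) × (Fin p → S)) ≃ₗ[S] ((Fin m → S) × (Fin p → S)) :=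
    (shearU (-ψ)).trans (shearL φ)
  have h1 : ∀ u, π2 (φ u) = π1 u := fun u => LinearMap.congr_fun hφ u
  have h2 : ∀ u, π1 (ψ u) = π2 u := fun u => LinearMap.congr_fun hψ u
  have key : (π2 ∘ₗ LinearMap.snd S (Fin m → S) (Fin p → S)) ∘ₗ (θ : _ →ₗ[S] _) =
      π1 ∘ₗ LinearMap.fst S (Fin m → S) (Fin p → S) := by
    apply LinearMap.ext
    intro v
    simp only [LinearMap.comp_apply, LinearMap.snd_apply, LinearMap.fst_apply,
      LinearEquiv.coe_coe]
    show π2 (v.2 + φ (v.1 + (-ψ) v.2)) = π1 v.1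
    simp only [LinearMap.neg_apply, map_add, h1, map_neg, h2]
    abel
  set K1 : Submodule S ((Fin m → S) × (Fin p → S)) := RA.prod ⊤ with hK1def
  set K2 : Submodule S ((Fin m → S) × (Fin p → S)) := (⊤ : Submodule S (Fin m → S)).prod RB
    with hK2def
  have hK1 : K1 = LinearMap.ker (π1 ∘ₗ LinearMap.fst S (Fin m → S) (Fin p → S)) := by
    ext ⟨a, b⟩
    simp [hK1def, π1, Submodule.Quotient.mk_eq_zero]
  have hK2 : K2 = LinearMap.ker (π2 ∘ₗ LinearMap.snd S (Fin m → S) (Fin p → S)) := by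
    ext ⟨a, b⟩
    simp [hK2def, π2, Submodule.Quotient.mk_eq_zero]
  have hcomap : Submodule.comap (θ : _ →ₗ[S] _) K2 = K1 := by
    rw [hK1, hK2, ← LinearMap.ker_comp, key]
  have hmapθ : Submodule.map (θ : _ →ₗ[S] _) K1 = K2 := by
    rw [← hcomap]
    exact Submodule.map_comap_eq_of_surjective θ.surjective _
  set G := (Fin m → S) × (Fin p → S)
  set μ := LinearMap.lsmul S G x with hμ
  have hcomm : (θ : G →ₗ[S] G) ∘ₗ μ = μ ∘ₗ (θ : G →ₗ[S] G) := by
    apply LinearMap.ext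
    intro v
    simp only [LinearMap.comp_apply, LinearMap.lsmul_apply, map_smul, hμ]
  have hmapx : Submodule.map (θ : G →ₗ[S] G) (Submodule.map μ K1) = Submodule.map μ K2 := by
    rw [← Submodule.map_comp, hcomm, Submodule.map_comp, hmapθ]
  have hN1 : Submodule.map μ K1 =
      (LinearMap.range (x • A).mulVecLin).prod
        (Submodule.pi Set.univ (fun _ : Fin p => (Ideal.span {x} : Submodule S S))) := by
    rw [hK1def, hμ, map_lsmul_prod, ← range_smul_mat, map_lsmul_top]
  have hN2 : Submodule.map μ K2 =
      (Submodule.pi Set.univ (fun _ : Fin m => (Ideal.span {x} : Submodule S S))).prod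
        (LinearMap.range (x • B).mulVecLin) := by
    rw [hK2def, hμ, map_lsmul_prod, ← range_smul_mat, map_lsmul_top]
  let eA : (G ⧸ Submodule.map μ K1) ≃ₗ[S]
      (MatCok (x • A) × (Fin p → S ⧸ Ideal.span {x})) :=
    (Submodule.quotEquivOfEq _ _ hN1).trans
      ((quotProd _ _).trans
        (LinearEquiv.prodCongr (LinearEquiv.refl S _) (Submodule.quotientPi _)))
  let eB : (G ⧸ Submodule.map μ K2) ≃ₗ[S]
      ((Fin m → S ⧸ Ideal.span {x}) × MatCok (x • B)) :=
    (Submodule.quotEquivOfEq _ _ hN2).trans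
      ((quotProd _ _).trans
        (LinearEquiv.prodCongr (Submodule.quotientPi _) (LinearEquiv.refl S _)))
  exact ⟨eA.symm.trans ((Submodule.Quotient.equiv _ _ θ hmapx).trans
    (eB.trans (LinearEquiv.prodComm S _ _)))⟩
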